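/- For any two positive definite real matrices A and B (not necessarily commuting), Tr[(A^{1/2} B A^{1/2})^{1/2}] ≥ Tr(A^{1/2} B^{1/2}). -/

import Mathlib

/-!
Put `M = A^{1/2} B^{1/2}` and let `P` be the square root of `A^{1/2} B A^{1/2} = M Mᵀ`.
As `M` is invertible, so is `P`, and `U = P⁻¹ M` is orthogonal: `M = P U` is the polar
decomposition of `M`. Writing `P = Rᵀ R`, expanding `0 ≤ Tr ((R - R U)ᵀ (R - R U))` gives
`Tr (P U) ≤ Tr P`, that is `Tr M ≤ Tr P`.
-/

open Matrix

section OldSqrt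

open scoped ComplexOrder

/-- The positive semidefinite square root of a positive semidefinite matrix
(the Mathlib definition of December 2024, since removed from Mathlib). -/
noncomputable def Matrix.PosSemidef.sqrt {𝕜 : Type*} [RCLike 𝕜] {n : Type*} [Fintype n]
    [DecidableEq n] {A : Matrix n n 𝕜} (hA : A.PosSemidef) : Matrix n n 𝕜 :=
  hA.1.eigenvectorUnitary.1 * diagonal ((↑) ∘ (√·) ∘ hA.1.eigenvalues) *
  (star hA.1.eigenvectorUnitary : Matrix n n 𝕜)

/-- The square root of a positive semidefinite matrix is positive semidefinite. -/
theorem Matrix.PosSemidef.posSemidef_sqrt {𝕜 : Type*} [RCLike 𝕜] {n : Type*} [Fintype n]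
    [DecidableEq n] {A : Matrix n n 𝕜} (hA : A.PosSemidef) : PosSemidef hA.sqrt := by
  unfold Matrix.PosSemidef.sqrt
  refine (PosSemidef.diagonal fun i => ?_).mul_mul_conjTranspose_same _
  simp only [Function.comp_apply, Pi.zero_apply]
  exact RCLike.ofReal_nonneg.mpr (Real.sqrt_nonneg _)

end OldSqrt

/-- If `A` and `B` are positive semidefinite, so is `√A * B * √A`. -/
lemma sqrt_sandwich_posSemidef {n : ℕ} {A B : Matrix (Fin n) (Fin n) ℝ}
    (hA : A.PosSemidef) (hB : B.PosSemidef) :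
    (hA.sqrt * B * hA.sqrt).PosSemidef := by
  have h := hB.conjTranspose_mul_mul_same hA.sqrt
  rwa [hA.posSemidef_sqrt.1] at h

section

open scoped ComplexOrder

namespace Matrix.PosSemidef

variable {𝕜 n : Type*} [RCLike 𝕜] [Fintype n] [DecidableEq n]

theorem sqrt_mul_self {A : Matrix n n 𝕜} (hA : A.PosSemidef) : hA.sqrt * hA.sqrt = A := by
  set U : Matrix n n 𝕜 := (hA.1.eigenvectorUnitary : Matrix n n 𝕜)
  set D := diagonal ((↑) ∘ (√·) ∘ hA.1.eigenvalues : n → 𝕜)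
  have hD : D * D = diagonal (RCLike.ofReal ∘ hA.1.eigenvalues) := by
    rw [diagonal_mul_diagonal]
    congr 1 with i
    simp [← RCLike.ofReal_mul, Real.mul_self_sqrt (hA.eigenvalues_nonneg i)]
  conv_rhs => rw [hA.1.spectral_theorem, Unitary.conjStarAlgAut_apply]
  calc U * D * star U * (U * D * star U) = U * (D * (star U * U) * D) * star U := by
        simp only [Matrix.mul_assoc]
    _ = _ := by rw [Unitary.coe_star_mul_self, Matrix.mul_one, hD]

theorem transpose_sqrt {A : Matrix n n ℝ} (hA : A.PosSemidef) : hA.sqrtᵀ = hA.sqrt := by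
  simpa only [conjTranspose_eq_transpose_of_trivial] using hA.posSemidef_sqrt.1.eq

end Matrix.PosSemidef

theorem Matrix.PosDef.isUnit_sqrt {𝕜 n : Type*} [RCLike 𝕜] [Fintype n] [DecidableEq n]
    {A : Matrix n n 𝕜} (hA : A.PosDef) : IsUnit hA.posSemidef.sqrt :=
  isUnit_of_mul_isUnit_left (hA.posSemidef.sqrt_mul_self ▸ hA.isUnit)

end

section

variable {n : Type*} [Fintype n] [DecidableEq n]

theorem Matrix.trace_transpose_mul_self_mul_le {R U : Matrix n n ℝ}
    (hU : U ∈ orthogonalGroup n ℝ) : (Rᵀ * R * U).trace ≤ (Rᵀ * R).trace := by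
  rw [mem_orthogonalGroup_iff] at hU
  have hsq : 0 ≤ ((R - R * U)ᵀ * (R - R * U)).trace := by
    simpa only [conjTranspose_eq_transpose_of_trivial] using
      (posSemidef_conjTranspose_mul_self (R - R * U)).trace_nonneg
  have hRU : ((R * U)ᵀ * (R * U)).trace = (Rᵀ * R).trace := by
    rw [transpose_mul, trace_mul_comm, Matrix.mul_assoc, ← Matrix.mul_assoc U, hU,
      Matrix.one_mul, trace_mul_comm]
  have hcross : ((R * U)ᵀ * R).trace = (Rᵀ * (R * U)).trace := by
    rw [← trace_transpose, transpose_mul, transpose_transpose]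
  rw [transpose_sub, Matrix.sub_mul, Matrix.mul_sub, Matrix.mul_sub, trace_sub, trace_sub, trace_sub,
    hRU, hcross] at hsq
  rw [Matrix.mul_assoc]
  linarith

theorem Matrix.PosSemidef.trace_mul_le_trace {Q U : Matrix n n ℝ}
    (hQ : Q.PosSemidef) (hU : U ∈ orthogonalGroup n ℝ) : (Q * U).trace ≤ Q.trace := by
  have hQ_eq : hQ.sqrtᵀ * hQ.sqrt = Q := by rw [hQ.transpose_sqrt, hQ.sqrt_mul_self]
  simpa only [hQ_eq] using trace_transpose_mul_self_mul_le (R := hQ.sqrt) hU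

theorem Matrix.trace_le_trace_of_mul_self_eq_mul_transpose {M P : Matrix n n ℝ}
    (hP : P.PosSemidef) (hPM : P * P = M * Mᵀ) (hM : IsUnit M) : M.trace ≤ P.trace := by
  have hPdet : IsUnit P.det := (isUnit_iff_isUnit_det P).mp <|
    isUnit_of_mul_isUnit_left (hPM ▸ hM.mul ((isUnit_transpose M).mpr hM))
  have hPt : Pᵀ = P := by simpa only [conjTranspose_eq_transpose_of_trivial] using hP.1.eq
  have hU : P⁻¹ * M ∈ orthogonalGroup n ℝ := by
    rw [mem_orthogonalGroup_iff, transpose_mul, transpose_nonsing_inv, hPt, Matrix.mul_assoc,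
      ← Matrix.mul_assoc M, ← hPM, Matrix.mul_assoc, mul_nonsing_inv _ hPdet, Matrix.mul_one,
      nonsing_inv_mul _ hPdet]
  simpa only [mul_nonsing_inv_cancel_left _ _ hPdet] using hP.trace_mul_le_trace hU

theorem Matrix.PosSemidef.sqrt_mul_mul_sqrt_eq {A B : Matrix n n ℝ} (hA : A.PosSemidef)
    (hB : B.PosSemidef) :
    hA.sqrt * B * hA.sqrt = hA.sqrt * hB.sqrt * (hA.sqrt * hB.sqrt)ᵀ := by
  rw [transpose_mul, hA.transpose_sqrt, hB.transpose_sqrt, Matrix.mul_assoc, Matrix.mul_assoc,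
    ← Matrix.mul_assoc hB.sqrt, hB.sqrt_mul_self]

end

/-- For any two positive definite real matrices `A` and `B` (not necessarily commuting),
`Tr[(A^{1/2} B A^{1/2})^{1/2}] ≥ Tr(A^{1/2} B^{1/2})`. -/
theorem trace_sqrt_sandwich_ge_trace_sqrt_mul_sqrt
    {n : ℕ} (A B : Matrix (Fin n) (Fin n) ℝ) (hA : A.PosDef) (hB : B.PosDef) :
    (sqrt_sandwich_posSemidef hA.posSemidef hB.posSemidef).sqrt.trace ≥
      (hA.posSemidef.sqrt * hB.posSemidef.sqrt).trace := by
  have hAB := sqrt_sandwich_posSemidef hA.posSemidef hB.posSemidef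
  exact trace_le_trace_of_mul_self_eq_mul_transpose hAB.posSemidef_sqrt
    (hAB.sqrt_mul_self.trans (hA.posSemidef.sqrt_mul_mul_sqrt_eq hB.posSemidef))
    (hA.isUnit_sqrt.mul hB.isUnit_sqrt)
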